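/- arXiv:1508.00076 — 3 statements merged into one kernel-verified Lean document; each statement's English description precedes it below -/
import Mathlib

section
/- Let G be a cumulative distribution function on [0,∞) with G(0)=0 and finite mean 1/μ := ∫₀^∞ (1−G(x)) dx ∈ (0,∞). Set Ḡ(t) := 1−G(t) for t ≥ 0 and Ḡ(t) := 1 for t < 0. Then for every n ≥ 1 and every θ = (θ_1,…,θ_n) ∈ ℝⁿ the function x ↦ Σ_{k=1}^{n−1} (exp(Σ_{i=1}^{k} θ_i·1{x ≤ t_i}) − 1)·(Ḡ(t_k − x) − Ḡ(t_{k+1} − x)) + (exp(Σ_{i=1}^{n} θ_i·1{x ≤ t_i}) − 1)·Ḡ(t_n − x) is integrable over ℝ, and μ times its integral over ℝ equals S_n(θ) := Σ_{m=1}^{n} (e^{θ_m}−1) + Σ_{k=1}^{n−1} H_k Σ_{m=k}^{n−1} (e^{θ_{m−k+1}}−1)·exp(Σ_{i=m−k+2}^{m} θ_i)·(e^{θ_{m+1}}−1). -/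
open MeasureTheory

/-- The tail function `Ḡ`: equals `1 - G(t)` for `t ≥ 0` and `1` for `t < 0`. -/
noncomputable def Gbar (G : ℝ → ℝ) (t : ℝ) : ℝ := if t < 0 then 1 else 1 - G t

/-- `S_n(θ)`: the cumulant-generating-function expression of the sampled
M/G/∞ queue-length process. -/
noncomputable def Sfun (H : ℕ → ℝ) (n : ℕ) (θ : ℕ → ℝ) : ℝ :=
  (∑ m ∈ Finset.Icc 1 n, (Real.exp (θ m) - 1)) +
    ∑ k ∈ Finset.Icc 1 (n - 1), H k *
      ∑ m ∈ Finset.Icc k (n - 1),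
        (Real.exp (θ (m - k + 1)) - 1) *
          Real.exp (∑ i ∈ Finset.Icc (m - k + 2) m, θ i) * (Real.exp (θ (m + 1)) - 1)

/-- The integrand `x ↦ Σ_{k=1}^{n−1} (exp(Σ_{i=1}^k θ_i 1{x ≤ t_i}) − 1)(Ḡ(t_k−x) − Ḡ(t_{k+1}−x))
    + (exp(Σ_{i=1}^n θ_i 1{x ≤ t_i}) − 1) Ḡ(t_n−x)` where `t_i = iδ`. -/
noncomputable def mgIntegrand (G : ℝ → ℝ) (δ : ℝ) (n : ℕ) (θ : ℕ → ℝ) (x : ℝ) : ℝ :=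
  (∑ k ∈ Finset.Icc 1 (n - 1),
      (Real.exp (∑ i ∈ Finset.Icc 1 k, if x ≤ (i : ℝ) * δ then θ i else 0) - 1) *
        (Gbar G ((k : ℝ) * δ - x) - Gbar G (((k : ℝ) + 1) * δ - x))) +
    (Real.exp (∑ i ∈ Finset.Icc 1 n, if x ≤ (i : ℝ) * δ then θ i else 0) - 1) *
      Gbar G ((n : ℝ) * δ - x)

open Finset

/-!
Write `A_k(x) = ∑_{i ≤ k} θ_i 1{x ≤ t_i}`. Summation by parts turns the integrand into
`∑_K (e^{θ_K} - 1) e^{A_{K-1}(x)} (1 - G)(t_K - x) 1{x ≤ t_K}`. As a function of the lag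
`y = t_K - x`, `e^{A_{K-1}}` is a step function jumping at `y = t_{K-i}`, so it telescopes into
`1 + ∑_{i<K} (e^{θ_i} - 1) e^{θ_{i+1} + ⋯ + θ_{K-1}} 1{y ≥ t_{K-i}}`. Each term is thus a constant times
`1 - G` restricted to a half-line, which is integrable with integral `H_{K-i} / μ`; regrouping the
pairs `i < K` by their lag `K - i` gives `S_n(θ)`.
-/

theorem Real.exp_sum_indicator_of_monotone {ι α : Type*} [LinearOrder ι] {E : ι → Set α}
    (hE : Monotone E) (c : ι → ℝ) (s : Finset ι) (y : α) :
    Real.exp (∑ i ∈ s, (E i).indicator (fun _ => c i) y) =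
      1 + ∑ i ∈ s, (E i).indicator
        (fun _ => (Real.exp (c i) - 1) * Real.exp (∑ j ∈ s with i < j, c j)) y := by
  induction s using Finset.induction_on_min with
  | empty => simp
  | insert a s ha ih =>
    have ha' : a ∉ s := fun h => lt_irrefl a (ha a h)
    have hsuffix : {j ∈ insert a s | a < j} = s := by
      rw [filter_insert, if_neg (lt_irrefl a), filter_true_of_mem ha]
    have hsum : ∑ i ∈ s, (E i).indicator
          (fun _ => (Real.exp (c i) - 1) * Real.exp (∑ j ∈ insert a s with i < j, c j)) y =
        ∑ i ∈ s, (E i).indicator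
          (fun _ => (Real.exp (c i) - 1) * Real.exp (∑ j ∈ s with i < j, c j)) y :=
      sum_congr rfl fun i hi => by rw [filter_insert, if_neg (ha i hi).not_gt]
    rw [sum_insert ha', sum_insert ha', hsuffix, hsum, Real.exp_add, add_left_comm, ← ih]
    by_cases hy : y ∈ E a
    · have hs : ∑ j ∈ s, (E j).indicator (fun _ => c j) y = ∑ j ∈ s, c j :=
        sum_congr rfl fun j hj => Set.indicator_of_mem (hE (ha j hj).le hy) _
      rw [Set.indicator_of_mem hy, Set.indicator_of_mem hy, hs]
      ring
    · simp [Set.indicator_of_notMem hy]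

theorem Finset.sum_Icc_by_parts {R : Type*} [CommRing R] (a g : ℕ → R) (ha : a 0 = 0)
    (n : ℕ) :
    ∑ k ∈ Icc 1 (n - 1), a k * (g k - g (k + 1)) + a n * g n =
      ∑ k ∈ Icc 1 n, (a k - a (k - 1)) * g k := by
  induction n with
  | zero => simp [ha]
  | succ n ih =>
    rcases n with _ | n
    · simp [ha]
    · simp only [Nat.add_sub_cancel] at ih ⊢
      rw [sum_Icc_succ_top (by omega), sum_Icc_succ_top (by omega), ← ih, Nat.add_sub_cancel]
      ring

noncomputable def mgExponent (δ : ℝ) (θ : ℕ → ℝ) (k : ℕ) (x : ℝ) : ℝ :=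
  ∑ i ∈ Icc 1 k, if x ≤ (i : ℝ) * δ then θ i else 0

section Tail

variable {g : ℝ → ℝ}

theorem integrable_indicator_Ici_comp_sub (hg : IntegrableOn g (Set.Ioi 0)) {t : ℝ}
    (ht : 0 ≤ t) (c : ℝ) : Integrable fun x => (Set.Ici t).indicator g (c - x) := by
  have hgt : IntegrableOn g (Set.Ici t) :=
    (integrableOn_Ici_iff_integrableOn_Ioi).2 (hg.mono_set (Set.Ioi_subset_Ioi ht))
  exact ((integrable_indicator_iff measurableSet_Ici).2 hgt).comp_sub_left c

theorem integral_indicator_Ici_comp_sub (t c : ℝ) :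
    ∫ x, (Set.Ici t).indicator g (c - x) = ∫ y in Set.Ioi t, g y := by
  rw [integral_sub_left_eq_self (fun y => (Set.Ici t).indicator g y),
    integral_indicator measurableSet_Ici, integral_Ici_eq_integral_Ioi]

end Tail

section Exponent

variable {δ : ℝ} (θ : ℕ → ℝ) {g : ℝ → ℝ}

theorem mgExponent_eq_sum_indicator (K : ℕ) (x : ℝ) :
    mgExponent δ θ (K - 1) x = ∑ i ∈ Icc 1 (K - 1),
      (Set.Ici (((K - i : ℕ) : ℝ) * δ)).indicator (fun _ => θ i) (K * δ - x) := by
  refine sum_congr rfl fun i hi => ?_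
  have hiK : i ≤ K := (mem_Icc.1 hi).2.trans (Nat.sub_le K 1)
  have hx : x ≤ i * δ ↔ ((K - i : ℕ) : ℝ) * δ ≤ K * δ - x := by
    rw [Nat.cast_sub hiK, sub_mul, sub_le_sub_iff_left]
  simp only [Set.indicator_apply, Set.mem_Ici, hx]

theorem exp_mgExponent_eq_one_add_sum_indicator (hδ : 0 ≤ δ) (K : ℕ) (x : ℝ) :
    Real.exp (mgExponent δ θ (K - 1) x) = 1 + ∑ i ∈ Icc 1 (K - 1),
      (Set.Ici (((K - i : ℕ) : ℝ) * δ)).indicator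
        (fun _ => (Real.exp (θ i) - 1) * Real.exp (∑ j ∈ Icc (i + 1) (K - 1), θ j))
        (K * δ - x) := by
  have hE : Monotone fun i : ℕ => Set.Ici (((K - i : ℕ) : ℝ) * δ) := fun i j hij =>
    Set.Ici_subset_Ici.2 (mul_le_mul_of_nonneg_right (by gcongr) hδ)
  rw [mgExponent_eq_sum_indicator, Real.exp_sum_indicator_of_monotone hE]
  congr 1
  refine sum_congr rfl fun i hi => ?_
  have hsuffix : {j ∈ Icc 1 (K - 1) | i < j} = Icc (i + 1) (K - 1) := by
    ext j; simp only [mem_filter, mem_Icc] at hi ⊢; omega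
  rw [hsuffix]

theorem exp_mgExponent_mul_indicator (hδ : 0 ≤ δ) (K : ℕ) (x : ℝ) :
    Real.exp (mgExponent δ θ (K - 1) x) * (Set.Ici 0).indicator g (K * δ - x) =
      (Set.Ici 0).indicator g (K * δ - x) + ∑ i ∈ Icc 1 (K - 1),
        (Real.exp (θ i) - 1) * Real.exp (∑ j ∈ Icc (i + 1) (K - 1), θ j) *
          (Set.Ici (((K - i : ℕ) : ℝ) * δ)).indicator g (K * δ - x) := by
  rw [exp_mgExponent_eq_one_add_sum_indicator θ hδ, add_mul, one_mul, sum_mul]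
  congr 1
  refine sum_congr rfl fun i _ => ?_
  by_cases hx : K * δ - x ∈ Set.Ici (((K - i : ℕ) : ℝ) * δ)
  · have h0 : K * δ - x ∈ Set.Ici 0 :=
      Set.mem_Ici.2 ((by positivity : (0 : ℝ) ≤ _).trans hx)
    rw [Set.indicator_of_mem hx, Set.indicator_of_mem hx, Set.indicator_of_mem h0]
  · rw [Set.indicator_of_notMem hx, Set.indicator_of_notMem hx, zero_mul, mul_zero]

theorem integrable_exp_mgExponent_mul_indicator (hδ : 0 ≤ δ) (hg : IntegrableOn g (Set.Ioi 0))
    (K : ℕ) :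
    Integrable fun x =>
      Real.exp (mgExponent δ θ (K - 1) x) * (Set.Ici 0).indicator g (K * δ - x) := by
  simp_rw [exp_mgExponent_mul_indicator θ hδ]
  exact (integrable_indicator_Ici_comp_sub hg le_rfl _).add <| integrable_finsetSum _ fun i _ =>
    (integrable_indicator_Ici_comp_sub hg (by positivity) _).const_mul _

theorem integral_exp_mgExponent_mul_indicator (hδ : 0 ≤ δ) (hg : IntegrableOn g (Set.Ioi 0))
    (K : ℕ) :
    ∫ x, Real.exp (mgExponent δ θ (K - 1) x) * (Set.Ici 0).indicator g (K * δ - x) =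
      (∫ y in Set.Ioi 0, g y) + ∑ i ∈ Icc 1 (K - 1),
        (Real.exp (θ i) - 1) * Real.exp (∑ j ∈ Icc (i + 1) (K - 1), θ j) *
          ∫ y in Set.Ioi (((K - i : ℕ) : ℝ) * δ), g y := by
  simp_rw [exp_mgExponent_mul_indicator θ hδ]
  rw [integral_add (integrable_indicator_Ici_comp_sub hg le_rfl _) <| integrable_finsetSum _
      fun i _ => (integrable_indicator_Ici_comp_sub hg (by positivity) _).const_mul _,
    integral_finsetSum _ fun i _ =>
      (integrable_indicator_Ici_comp_sub hg (by positivity) _).const_mul _]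
  simp_rw [integral_const_mul, integral_indicator_Ici_comp_sub]

end Exponent

theorem exp_mgExponent_sub_mul_Gbar (G : ℝ → ℝ) (δ : ℝ) (θ : ℕ → ℝ) {K : ℕ} (hK : 1 ≤ K)
    (x : ℝ) :
    (Real.exp (mgExponent δ θ K x) - Real.exp (mgExponent δ θ (K - 1) x)) * Gbar G (K * δ - x) =
      (Real.exp (θ K) - 1) * (Real.exp (mgExponent δ θ (K - 1) x) *
        (Set.Ici 0).indicator (fun t => 1 - G t) (K * δ - x)) := by
  obtain ⟨m, rfl⟩ := Nat.exists_eq_add_of_le' hK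
  rw [Nat.add_sub_cancel, mgExponent, sum_Icc_succ_top (by omega), ← mgExponent, Real.exp_add]
  by_cases hx : x ≤ ((m + 1 : ℕ) : ℝ) * δ
  · have h0 : 0 ≤ ((m + 1 : ℕ) : ℝ) * δ - x := by linarith
    simp only [hx, if_true, Gbar, not_lt.2 h0, if_false,
      Set.indicator_of_mem (Set.mem_Ici.2 h0)]
    ring
  · have h0 : ((m + 1 : ℕ) : ℝ) * δ - x < 0 := by linarith
    simp only [hx, if_false, Real.exp_zero, mul_one, sub_self, zero_mul,
      Set.indicator_of_notMem (Set.notMem_Ici.2 h0), mul_zero]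

theorem mgIntegrand_eq_sum (G : ℝ → ℝ) (δ : ℝ) (n : ℕ) (θ : ℕ → ℝ) (x : ℝ) :
    mgIntegrand G δ n θ x = ∑ K ∈ Icc 1 n, (Real.exp (θ K) - 1) *
      (Real.exp (mgExponent δ θ (K - 1) x) *
        (Set.Ici 0).indicator (fun t => 1 - G t) (K * δ - x)) := by
  have h := sum_Icc_by_parts (fun k => Real.exp (mgExponent δ θ k x) - 1)
    (fun k : ℕ => Gbar G (k * δ - x)) (by simp [mgExponent]) n
  simp only [Nat.cast_add, Nat.cast_one, sub_sub_sub_cancel_right] at h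
  exact h.trans <|
    sum_congr rfl fun K hK => exp_mgExponent_sub_mul_Gbar G δ θ (mem_Icc.1 hK).1 x

theorem sum_mul_one_add_sum_eq_Sfun (H : ℕ → ℝ) (n : ℕ) (θ : ℕ → ℝ) :
    ∑ K ∈ Icc 1 n, (Real.exp (θ K) - 1) * (1 + ∑ i ∈ Icc 1 (K - 1),
        (Real.exp (θ i) - 1) * Real.exp (∑ j ∈ Icc (i + 1) (K - 1), θ j) * H (K - i)) =
      Sfun H n θ := by
  simp only [Sfun, mul_add, mul_one, sum_add_distrib, mul_sum]
  congr 1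
  rw [sum_sigma', sum_sigma']
  refine sum_nbij' (fun p => ⟨p.1 - p.2, p.1 - 1⟩) (fun q => ⟨q.2 + 1, q.2 - q.1 + 1⟩)
    ?_ ?_ ?_ ?_ ?_
  · rintro ⟨K, i⟩ h
    simp only [mem_sigma, mem_Icc] at h ⊢
    omega
  · rintro ⟨k, m⟩ h
    simp only [mem_sigma, mem_Icc] at h ⊢
    omega
  · rintro ⟨K, i⟩ h
    simp only [mem_sigma, mem_Icc] at h
    simp only [Sigma.mk.injEq, heq_eq_eq]
    omega
  · rintro ⟨k, m⟩ h
    simp only [mem_sigma, mem_Icc] at h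
    simp only [Sigma.mk.injEq, heq_eq_eq]
    omega
  · rintro ⟨K, i⟩ h
    simp only [mem_sigma, mem_Icc] at h
    dsimp only
    rw [show K - 1 - (K - i) + 1 = i by omega, show K - 1 - (K - i) + 2 = i + 1 by omega,
      show K - 1 + 1 = K by omega]
    ring

theorem stmt0_general (G : ℝ → ℝ) (μ δ : ℝ) (hδ : 0 < δ)
    (hμ : 0 < μ)
    (hint : IntegrableOn (fun x => 1 - G x) (Set.Ioi 0))
    (hmean : μ⁻¹ = ∫ x in Set.Ioi (0 : ℝ), (1 - G x))
    (n : ℕ) (θ : ℕ → ℝ) :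
    Integrable (mgIntegrand G δ n θ) ∧
      μ * ∫ x : ℝ, mgIntegrand G δ n θ x =
        Sfun (fun k => μ * ∫ x in Set.Ioi ((k : ℝ) * δ), (1 - G x)) n θ := by
  have hB := integrable_exp_mgExponent_mul_indicator θ hδ.le hint
  have hμ1 : μ * ∫ x in Set.Ioi 0, (1 - G x) = 1 := by rw [← hmean, mul_inv_cancel₀ hμ.ne']
  rw [show mgIntegrand G δ n θ = _ from funext (mgIntegrand_eq_sum G δ n θ)]
  refine ⟨integrable_finsetSum _ fun K _ => (hB K).const_mul _, ?_⟩
  rw [integral_finsetSum _ fun K _ => (hB K).const_mul _, mul_sum,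
    ← sum_mul_one_add_sum_eq_Sfun]
  refine sum_congr rfl fun K _ => ?_
  rw [integral_const_mul, integral_exp_mgExponent_mul_indicator θ hδ.le hint, mul_left_comm,
    mul_add, hμ1, mul_sum]
  simp only [mul_left_comm μ]

/-- integrability of the conditional-MGF integrand and the identity
`μ ∫ f = S_n(θ)` with `H_k = μ ∫_{kδ}^∞ (1−G)`. -/
theorem stmt0 (G : ℝ → ℝ) (μ δ : ℝ) (hδ : 0 < δ)
    (hmono : Monotone G) (hG0 : G 0 = 0) (hG01 : ∀ x, 0 ≤ G x ∧ G x ≤ 1)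
    (hμ : 0 < μ)
    (hint : IntegrableOn (fun x => 1 - G x) (Set.Ioi 0))
    (hmean : μ⁻¹ = ∫ x in Set.Ioi (0 : ℝ), (1 - G x))
    (n : ℕ) (hn : 1 ≤ n) (θ : ℕ → ℝ) :
    Integrable (mgIntegrand G δ n θ) ∧
      μ * ∫ x : ℝ, mgIntegrand G δ n θ x =
        Sfun (fun k => μ * ∫ x in Set.Ioi ((k : ℝ) * δ), (1 - G x)) n θ :=
  stmt0_general G μ δ hδ hμ hint hmean n θ
end

section
/- Let ρ > 0 and let H_0 = 1 and H_1, H_2, … be real numbers. Fix indices 1 ≤ i ≤ j ≤ k ≤ m, and define for θ = (θ_1,θ_2,θ_3,θ_4) ∈ ℝ⁴: S(θ) := Σ_{l=1}^{4}(e^{θ_l}−1) + H_{j−i}(e^{θ_1}−1)(e^{θ_2}−1) + H_{k−i}(e^{θ_1}−1)e^{θ_2}(e^{θ_3}−1) + H_{m−i}(e^{θ_1}−1)e^{θ_2+θ_3}(e^{θ_4}−1) + H_{k−j}(e^{θ_2}−1)(e^{θ_3}−1) + H_{m−j}(e^{θ_2}−1)e^{θ_3}(e^{θ_4}−1) + H_{m−k}(e^{θ_3}−1)(e^{θ_4}−1).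 Suppose (Y_1,Y_2,Y_3,Y_4) is a random vector such that E exp(θ_1Y_1+θ_2Y_2+θ_3Y_3+θ_4Y_4) = exp(ρ S(θ)) (finite) for all θ ∈ ℝ⁴. Then E[Y_1Y_2Y_3Y_4] = ρ⁴ + ρ³(H_{j−i}+H_{k−i}+H_{m−i}+H_{k−j}+H_{m−j}+H_{m−k}) + ρ²(H_{k−i}+H_{m−j}+2H_{m−i}+H_{j−i}H_{m−k}+H_{k−i}H_{m−j}+H_{k−j}H_{m−i}) + ρH_{m−i}. -/
open MeasureTheory ProbabilityTheory Real

-- pointwise facts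
lemma fact1 (y : ℝ) : (1:ℝ) ≤ exp (2*y) + exp (-(2*y)) := by
  nlinarith [Real.exp_pos (2*y), Real.exp_pos (-(2*y)),
    Real.add_one_le_exp (2*y), Real.add_one_le_exp (-(2*y))]

lemma fact3 (y : ℝ) : (1 + |y|) * exp |y| ≤ exp (2*y) + exp (-(2*y)) := by
  have h1 : (1 + |y|) ≤ exp |y| := by
    have := Real.add_one_le_exp |y|; linarith
  have h2 : (1 + |y|) * exp |y| ≤ exp |y| * exp |y| := by
    have := Real.exp_pos |y|; nlinarith
  have h3 : exp |y| * exp |y| = exp (2*|y|) := by rw [← Real.exp_add]; ring_nf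
  have h4 : exp (2*|y|) ≤ exp (2*y) + exp (-(2*y)) := by
    rcases abs_cases y with ⟨h, _⟩ | ⟨h, _⟩
    · rw [h]; have := (Real.exp_pos (-(2*y))).le; linarith
    · rw [h]; have := (Real.exp_pos (2*y)).le
      have : exp (2 * -y) = exp (-(2*y)) := by ring_nf
      rw [this]; linarith [(Real.exp_pos (2*y)).le]
  linarith

lemma fact2 (y : ℝ) : |y| ≤ exp (2*y) + exp (-(2*y)) := by
  have h := fact3 y
  have h2 : |y| ≤ (1 + |y|) * exp |y| := by
    have h3 : (1:ℝ) ≤ exp |y| := by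
      rw [← Real.exp_zero]; exact Real.exp_le_exp.2 (abs_nonneg y)
    nlinarith [abs_nonneg y]
  linarith

lemma master {Ω : Type*} [MeasureSpace Ω] {W X R G : Ω → ℝ}
    (hW : AEStronglyMeasurable W (ℙ : Measure Ω)) (hX : AEMeasurable X (ℙ : Measure Ω)) (hR : AEMeasurable R (ℙ : Measure Ω))
    (hdom : ∀ ω, |W ω| * ((1 + |X ω|) * Real.exp |X ω|) ≤ G ω)
    (hG : ∀ t : ℝ, Integrable (fun ω => G ω * Real.exp (t * X ω + R ω))) (t₀ : ℝ) :
    Integrable (fun ω => W ω * X ω * Real.exp (t₀ * X ω + R ω)) ∧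
      HasDerivAt (fun t => ∫ ω, W ω * Real.exp (t * X ω + R ω))
        (∫ ω, W ω * X ω * Real.exp (t₀ * X ω + R ω)) t₀ := by
  have hmeasE : ∀ t : ℝ, AEStronglyMeasurable (fun ω => Real.exp (t * X ω + R ω)) (ℙ : Measure Ω) :=
    fun t => (Real.measurable_exp.comp_aemeasurable ((hX.const_mul t).add hR)).aestronglyMeasurable
  have key1 : ∀ ω, (1:ℝ) ≤ (1 + |X ω|) * Real.exp |X ω| := by
    intro ω
    have h1 : (1:ℝ) ≤ 1 + |X ω| := by linarith [abs_nonneg (X ω)]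
    have h2 : (1:ℝ) ≤ Real.exp |X ω| := by
      rw [← Real.exp_zero]; exact Real.exp_le_exp.2 (abs_nonneg (X ω))
    nlinarith
  have hGnn : ∀ ω, 0 ≤ G ω := fun ω =>
    le_trans (by positivity) (hdom ω)
  have hkey2 : ∀ (t : ℝ) (ω : Ω), t ∈ Metric.ball t₀ 1 →
      |W ω * X ω| * Real.exp (t * X ω + R ω) ≤ G ω * Real.exp (t₀ * X ω + R ω) := by
    intro t ω ht
    have hsplit : Real.exp (t * X ω + R ω)
        = Real.exp ((t - t₀) * X ω) * Real.exp (t₀ * X ω + R ω) := by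
      rw [← Real.exp_add]; ring_nf
    have hb : Real.exp ((t - t₀) * X ω) ≤ Real.exp |X ω| := by
      apply Real.exp_le_exp.2
      have h1 : |t - t₀| ≤ 1 := by
        have := Metric.mem_ball.1 ht
        rw [Real.dist_eq] at this; linarith
      calc (t - t₀) * X ω ≤ |(t - t₀) * X ω| := le_abs_self _
        _ = |t - t₀| * |X ω| := abs_mul _ _
        _ ≤ 1 * |X ω| := by
            exact mul_le_mul_of_nonneg_right h1 (abs_nonneg _)
        _ = |X ω| := one_mul _
    have hWX : |W ω * X ω| * Real.exp |X ω| ≤ G ω := by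
      rw [abs_mul]
      calc |W ω| * |X ω| * Real.exp |X ω| ≤ |W ω| * ((1 + |X ω|) * Real.exp |X ω|) := by
            have := Real.exp_pos |X ω|
            nlinarith [abs_nonneg (W ω), abs_nonneg (X ω)]
        _ ≤ G ω := hdom ω
    rw [hsplit]
    calc |W ω * X ω| * (Real.exp ((t - t₀) * X ω) * Real.exp (t₀ * X ω + R ω))
        ≤ |W ω * X ω| * (Real.exp |X ω| * Real.exp (t₀ * X ω + R ω)) :=
          mul_le_mul_of_nonneg_left (mul_le_mul_of_nonneg_right hb (Real.exp_pos _).le)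
            (abs_nonneg _)
      _ = (|W ω * X ω| * Real.exp |X ω|) * Real.exp (t₀ * X ω + R ω) := by ring
      _ ≤ G ω * Real.exp (t₀ * X ω + R ω) := by
          exact mul_le_mul_of_nonneg_right hWX (Real.exp_pos _).le
  have h := hasDerivAt_integral_of_dominated_loc_of_deriv_le (μ := (ℙ : Measure Ω))
    (F := fun t ω => W ω * Real.exp (t * X ω + R ω))
    (F' := fun t ω => W ω * X ω * Real.exp (t * X ω + R ω))
    (x₀ := t₀) (bound := fun ω => G ω * Real.exp (t₀ * X ω + R ω)) (Metric.ball_mem_nhds t₀ one_pos)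
    (Filter.Eventually.of_forall fun t => hW.mul (hmeasE t))
    ?_ ((hW.mul (hX.aestronglyMeasurable)).mul (hmeasE t₀)) ?_ (hG t₀) ?_
  · exact h
  · -- Integrable (F t₀)
    apply (hG t₀).mono (hW.mul (hmeasE t₀))
    apply Filter.Eventually.of_forall
    intro ω
    simp only [Pi.mul_apply, norm_mul, Real.norm_eq_abs, Real.abs_exp,
      abs_of_nonneg (hGnn ω)]
    have h1 : |W ω| ≤ G ω := le_trans (by nlinarith [key1 ω, abs_nonneg (W ω)]) (hdom ω)
    exact mul_le_mul_of_nonneg_right h1 (Real.exp_pos _).le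
  · -- bound
    apply Filter.Eventually.of_forall
    intro ω t ht
    simp only [norm_mul, Real.norm_eq_abs, Real.abs_exp]
    have := hkey2 t ω ht
    rw [abs_mul] at this
    exact this
  · -- differentiability
    apply Filter.Eventually.of_forall
    intro ω t ht
    have h1 : HasDerivAt (fun s : ℝ => s * X ω + R ω) (X ω) t := by
      simpa using (hasDerivAt_mul_const (X ω)).add_const (R ω)
    have h2 := (h1.exp).const_mul (W ω)
    refine h2.congr_deriv ?_
    ring

section IntP
variable {Ω : Type*} [MeasureSpace Ω] (Y1 Y2 Y3 Y4 : Ω → ℝ)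
  (hint : ∀ t1 t2 t3 t4 : ℝ,
    Integrable (fun ω => Real.exp (t1 * Y1 ω + t2 * Y2 ω + t3 * Y3 ω + t4 * Y4 ω)))
include hint

private lemma L4 (t1 t2 t3 t4 : ℝ) :
    Integrable (fun ω => (Real.exp (2*Y4 ω) + Real.exp (-(2*Y4 ω))) *
      Real.exp (t1 * Y1 ω + t2 * Y2 ω + t3 * Y3 ω + t4 * Y4 ω)) := by
  have heq : (fun ω => (Real.exp (2*Y4 ω) + Real.exp (-(2*Y4 ω))) *
      Real.exp (t1 * Y1 ω + t2 * Y2 ω + t3 * Y3 ω + t4 * Y4 ω))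
      = fun ω => Real.exp (t1 * Y1 ω + t2 * Y2 ω + t3 * Y3 ω + (t4+2) * Y4 ω)
        + Real.exp (t1 * Y1 ω + t2 * Y2 ω + t3 * Y3 ω + (t4-2) * Y4 ω) := by
    funext ω
    have e1 : t1 * Y1 ω + t2 * Y2 ω + t3 * Y3 ω + (t4+2) * Y4 ω
        = 2*Y4 ω + (t1 * Y1 ω + t2 * Y2 ω + t3 * Y3 ω + t4 * Y4 ω) := by ring
    have e2 : t1 * Y1 ω + t2 * Y2 ω + t3 * Y3 ω + (t4-2) * Y4 ω
        = -(2*Y4 ω) + (t1 * Y1 ω + t2 * Y2 ω + t3 * Y3 ω + t4 * Y4 ω) := by ring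
    rw [e1, e2, Real.exp_add (2*Y4 ω), Real.exp_add (-(2*Y4 ω))]; ring
  rw [heq]
  exact (hint t1 t2 t3 (t4+2)).add (hint t1 t2 t3 (t4-2))

private lemma L3 (t1 t2 t3 t4 : ℝ) :
    Integrable (fun ω => (Real.exp (2*Y3 ω) + Real.exp (-(2*Y3 ω))) *
      ((Real.exp (2*Y4 ω) + Real.exp (-(2*Y4 ω))) *
      Real.exp (t1 * Y1 ω + t2 * Y2 ω + t3 * Y3 ω + t4 * Y4 ω))) := by
  have heq : (fun ω => (Real.exp (2*Y3 ω) + Real.exp (-(2*Y3 ω))) *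
      ((Real.exp (2*Y4 ω) + Real.exp (-(2*Y4 ω))) *
      Real.exp (t1 * Y1 ω + t2 * Y2 ω + t3 * Y3 ω + t4 * Y4 ω)))
      = fun ω => (Real.exp (2*Y4 ω) + Real.exp (-(2*Y4 ω))) *
          Real.exp (t1 * Y1 ω + t2 * Y2 ω + (t3+2) * Y3 ω + t4 * Y4 ω)
        + (Real.exp (2*Y4 ω) + Real.exp (-(2*Y4 ω))) *
          Real.exp (t1 * Y1 ω + t2 * Y2 ω + (t3-2) * Y3 ω + t4 * Y4 ω) := by
    funext ω
    have e1 : t1 * Y1 ω + t2 * Y2 ω + (t3+2) * Y3 ω + t4 * Y4 ω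
        = 2*Y3 ω + (t1 * Y1 ω + t2 * Y2 ω + t3 * Y3 ω + t4 * Y4 ω) := by ring
    have e2 : t1 * Y1 ω + t2 * Y2 ω + (t3-2) * Y3 ω + t4 * Y4 ω
        = -(2*Y3 ω) + (t1 * Y1 ω + t2 * Y2 ω + t3 * Y3 ω + t4 * Y4 ω) := by ring
    rw [e1, e2, Real.exp_add (2*Y3 ω), Real.exp_add (-(2*Y3 ω))]; ring
  rw [heq]
  exact (L4 Y1 Y2 Y3 Y4 hint t1 t2 (t3+2) t4).add (L4 Y1 Y2 Y3 Y4 hint t1 t2 (t3-2) t4)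

private lemma L2 (t1 t2 t3 t4 : ℝ) :
    Integrable (fun ω => (Real.exp (2*Y2 ω) + Real.exp (-(2*Y2 ω))) *
      ((Real.exp (2*Y3 ω) + Real.exp (-(2*Y3 ω))) *
      ((Real.exp (2*Y4 ω) + Real.exp (-(2*Y4 ω))) *
      Real.exp (t1 * Y1 ω + t2 * Y2 ω + t3 * Y3 ω + t4 * Y4 ω)))) := by
  have heq : (fun ω => (Real.exp (2*Y2 ω) + Real.exp (-(2*Y2 ω))) *
      ((Real.exp (2*Y3 ω) + Real.exp (-(2*Y3 ω))) *
      ((Real.exp (2*Y4 ω) + Real.exp (-(2*Y4 ω))) *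
      Real.exp (t1 * Y1 ω + t2 * Y2 ω + t3 * Y3 ω + t4 * Y4 ω))))
      = fun ω => (Real.exp (2*Y3 ω) + Real.exp (-(2*Y3 ω))) *
          ((Real.exp (2*Y4 ω) + Real.exp (-(2*Y4 ω))) *
          Real.exp (t1 * Y1 ω + (t2+2) * Y2 ω + t3 * Y3 ω + t4 * Y4 ω))
        + (Real.exp (2*Y3 ω) + Real.exp (-(2*Y3 ω))) *
          ((Real.exp (2*Y4 ω) + Real.exp (-(2*Y4 ω))) *
          Real.exp (t1 * Y1 ω + (t2-2) * Y2 ω + t3 * Y3 ω + t4 * Y4 ω)) := by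
    funext ω
    have e1 : t1 * Y1 ω + (t2+2) * Y2 ω + t3 * Y3 ω + t4 * Y4 ω
        = 2*Y2 ω + (t1 * Y1 ω + t2 * Y2 ω + t3 * Y3 ω + t4 * Y4 ω) := by ring
    have e2 : t1 * Y1 ω + (t2-2) * Y2 ω + t3 * Y3 ω + t4 * Y4 ω
        = -(2*Y2 ω) + (t1 * Y1 ω + t2 * Y2 ω + t3 * Y3 ω + t4 * Y4 ω) := by ring
    rw [e1, e2, Real.exp_add (2*Y2 ω), Real.exp_add (-(2*Y2 ω))]; ring
  rw [heq]
  exact (L3 Y1 Y2 Y3 Y4 hint t1 (t2+2) t3 t4).add (L3 Y1 Y2 Y3 Y4 hint t1 (t2-2) t3 t4)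

lemma intP (t1 t2 t3 t4 : ℝ) :
    Integrable (fun ω => (Real.exp (2*Y1 ω) + Real.exp (-(2*Y1 ω))) *
      ((Real.exp (2*Y2 ω) + Real.exp (-(2*Y2 ω))) *
      ((Real.exp (2*Y3 ω) + Real.exp (-(2*Y3 ω))) *
      ((Real.exp (2*Y4 ω) + Real.exp (-(2*Y4 ω))) *
      Real.exp (t1 * Y1 ω + t2 * Y2 ω + t3 * Y3 ω + t4 * Y4 ω))))) := by
  have heq : (fun ω => (Real.exp (2*Y1 ω) + Real.exp (-(2*Y1 ω))) *
      ((Real.exp (2*Y2 ω) + Real.exp (-(2*Y2 ω))) *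
      ((Real.exp (2*Y3 ω) + Real.exp (-(2*Y3 ω))) *
      ((Real.exp (2*Y4 ω) + Real.exp (-(2*Y4 ω))) *
      Real.exp (t1 * Y1 ω + t2 * Y2 ω + t3 * Y3 ω + t4 * Y4 ω)))))
      = fun ω => (Real.exp (2*Y2 ω) + Real.exp (-(2*Y2 ω))) *
          ((Real.exp (2*Y3 ω) + Real.exp (-(2*Y3 ω))) *
          ((Real.exp (2*Y4 ω) + Real.exp (-(2*Y4 ω))) *
          Real.exp ((t1+2) * Y1 ω + t2 * Y2 ω + t3 * Y3 ω + t4 * Y4 ω)))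
        + (Real.exp (2*Y2 ω) + Real.exp (-(2*Y2 ω))) *
          ((Real.exp (2*Y3 ω) + Real.exp (-(2*Y3 ω))) *
          ((Real.exp (2*Y4 ω) + Real.exp (-(2*Y4 ω))) *
          Real.exp ((t1-2) * Y1 ω + t2 * Y2 ω + t3 * Y3 ω + t4 * Y4 ω))) := by
    funext ω
    have e1 : (t1+2) * Y1 ω + t2 * Y2 ω + t3 * Y3 ω + t4 * Y4 ω
        = 2*Y1 ω + (t1 * Y1 ω + t2 * Y2 ω + t3 * Y3 ω + t4 * Y4 ω) := by ring
    have e2 : (t1-2) * Y1 ω + t2 * Y2 ω + t3 * Y3 ω + t4 * Y4 ω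
        = -(2*Y1 ω) + (t1 * Y1 ω + t2 * Y2 ω + t3 * Y3 ω + t4 * Y4 ω) := by ring
    rw [e1, e2, Real.exp_add (2*Y1 ω), Real.exp_add (-(2*Y1 ω))]; ring
  rw [heq]
  exact (L2 Y1 Y2 Y3 Y4 hint (t1+2) t2 t3 t4).add (L2 Y1 Y2 Y3 Y4 hint (t1-2) t2 t3 t4)

end IntP

lemma stagederiv (p q r s u w : ℝ) :
    HasDerivAt (fun t => (p + q * (Real.exp t - 1) + r * (Real.exp t - 1)^2
        + s * (Real.exp t - 1)^3) * Real.exp (u + w * Real.exp t))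
      ((q + p * w) * Real.exp (u + w)) 0 := by
  have h1 : HasDerivAt (fun v : ℝ => v - 1) 1 1 := (hasDerivAt_id 1).sub_const 1
  have hpoly : HasDerivAt (fun v : ℝ => p + q * (v-1) + r * (v-1)^2 + s * (v-1)^3) q 1 := by
    have h2 := h1.pow 2
    have h3 := h1.pow 3
    have h := (((h1.const_mul q).const_add p).add (h2.const_mul r)).add (h3.const_mul s)
    refine h.congr_deriv ?_
    norm_num
  have hexp : HasDerivAt (fun v : ℝ => Real.exp (u + w * v)) (Real.exp (u + w * 1) * w) 1 := by
    have := (((hasDerivAt_id (1:ℝ)).const_mul w).const_add u).exp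
    simpa using this
  have hv := hpoly.mul hexp
  have hv1 : HasDerivAt (fun v : ℝ => (p + q * (v-1) + r * (v-1)^2 + s * (v-1)^3)
      * Real.exp (u + w * v)) ((q + p * w) * Real.exp (u + w)) 1 := by
    refine hv.congr_deriv ?_
    norm_num
    ring
  have hv0 : HasDerivAt (fun v : ℝ => (p + q * (v-1) + r * (v-1)^2 + s * (v-1)^3)
      * Real.exp (u + w * v)) ((q + p * w) * Real.exp (u + w)) (Real.exp 0) := by
    rw [Real.exp_zero]; exact hv1
  have := hv0.comp 0 (Real.hasDerivAt_exp 0)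
  simp only [Real.exp_zero, mul_one] at this; exact this

lemma mul4_le {x1 x2 x3 x4 g1 g2 g3 g4 : ℝ} (h1 : x1 ≤ g1) (h2 : x2 ≤ g2) (h3 : x3 ≤ g3)
    (h4 : x4 ≤ g4) (n2 : 0 ≤ x2) (n3 : 0 ≤ x3) (n4 : 0 ≤ x4)
    (m1 : 0 ≤ g1) (m2 : 0 ≤ g2) (m3 : 0 ≤ g3) :
    x1 * (x2 * (x3 * x4)) ≤ g1 * (g2 * (g3 * g4)) := by
  have i34 : x3 * x4 ≤ g3 * g4 := mul_le_mul h3 h4 n4 m3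
  have i234 : x2 * (x3 * x4) ≤ g2 * (g3 * g4) := mul_le_mul h2 i34 (by positivity) m2
  exact mul_le_mul h1 i234 (by positivity) m1


theorem core {Ω : Type*} [MeasureSpace Ω]
    (ρ a b c d e f : ℝ) (Y1 Y2 Y3 Y4 : Ω → ℝ)
    (hmgf : ∀ t1 t2 t3 t4 : ℝ,
      Integrable (fun ω => Real.exp (t1 * Y1 ω + t2 * Y2 ω + t3 * Y3 ω + t4 * Y4 ω)) ∧
        ∫ ω, Real.exp (t1 * Y1 ω + t2 * Y2 ω + t3 * Y3 ω + t4 * Y4 ω) =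
          Real.exp (ρ * (((Real.exp t1 - 1) + (Real.exp t2 - 1) + (Real.exp t3 - 1) + (Real.exp t4 - 1)) +
    a * (Real.exp t1 - 1) * (Real.exp t2 - 1) +
    b * (Real.exp t1 - 1) * Real.exp t2 * (Real.exp t3 - 1) +
    c * (Real.exp t1 - 1) * Real.exp (t2 + t3) * (Real.exp t4 - 1) +
    d * (Real.exp t2 - 1) * (Real.exp t3 - 1) +
    e * (Real.exp t2 - 1) * Real.exp t3 * (Real.exp t4 - 1) +
    f * (Real.exp t3 - 1) * (Real.exp t4 - 1)))) :
    Integrable (fun ω => Y1 ω * Y2 ω * Y3 ω * Y4 ω) ∧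
      ∫ ω, Y1 ω * Y2 ω * Y3 ω * Y4 ω =
        ρ ^ 4 + ρ ^ 3 * (a + b + c + d + e + f) +
          ρ ^ 2 * (b + e + 2 * c + a * f + b * e + d * c) + ρ * c := by
  have hint : ∀ t1 t2 t3 t4 : ℝ,
      Integrable (fun ω => Real.exp (t1 * Y1 ω + t2 * Y2 ω + t3 * Y3 ω + t4 * Y4 ω)) :=
    fun t1 t2 t3 t4 => (hmgf t1 t2 t3 t4).1
  have hY1 : AEMeasurable Y1 (ℙ : Measure Ω) := by
    have h := Real.measurable_log.comp_aemeasurable (hint 1 0 0 0).aemeasurable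
    exact h.congr (Filter.Eventually.of_forall fun ω => by simp)
  have hY2 : AEMeasurable Y2 (ℙ : Measure Ω) := by
    have h := Real.measurable_log.comp_aemeasurable (hint 0 1 0 0).aemeasurable
    exact h.congr (Filter.Eventually.of_forall fun ω => by simp)
  have hY3 : AEMeasurable Y3 (ℙ : Measure Ω) := by
    have h := Real.measurable_log.comp_aemeasurable (hint 0 0 1 0).aemeasurable
    exact h.congr (Filter.Eventually.of_forall fun ω => by simp)
  have hY4 : AEMeasurable Y4 (ℙ : Measure Ω) := by
    have h := Real.measurable_log.comp_aemeasurable (hint 0 0 0 1).aemeasurable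
    exact h.congr (Filter.Eventually.of_forall fun ω => by simp)
  -- Stage 1
  have eq1 : ∀ t2 t3 t4 : ℝ,
      ∫ ω, Y1 ω * Real.exp (t2 * Y2 ω + (t3 * Y3 ω + t4 * Y4 ω)) = ρ * (1 + a * (Real.exp t2 - 1) + b * Real.exp t2 * (Real.exp t3 - 1) + c * (Real.exp t2 * Real.exp t3) * (Real.exp t4 - 1)) * Real.exp (ρ * ((Real.exp t2 - 1) + (Real.exp t3 - 1) + (Real.exp t4 - 1) + d * (Real.exp t2 - 1) * (Real.exp t3 - 1) + e * (Real.exp t2 - 1) * Real.exp t3 * (Real.exp t4 - 1) + f * (Real.exp t3 - 1) * (Real.exp t4 - 1))) := by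
    intro t2 t3 t4
    obtain ⟨_, hder⟩ := master (W := fun _ : Ω => (1:ℝ)) (X := Y1)
      (R := fun ω => t2 * Y2 ω + (t3 * Y3 ω + t4 * Y4 ω))
      aestronglyMeasurable_const hY1
      ((hY2.const_mul t2).add ((hY3.const_mul t3).add (hY4.const_mul t4)))
      (fun ω => by
        calc |(1:ℝ)| * ((1 + |Y1 ω|) * Real.exp |Y1 ω|)
            = ((1 + |Y1 ω|) * Real.exp |Y1 ω|) * (1 * (1 * 1)) := by rw [abs_one]; ring
          _ ≤ ((Real.exp (2*Y1 ω) + Real.exp (-(2*Y1 ω))) * ((Real.exp (2*Y2 ω) + Real.exp (-(2*Y2 ω))) * ((Real.exp (2*Y3 ω) + Real.exp (-(2*Y3 ω))) * (Real.exp (2*Y4 ω) + Real.exp (-(2*Y4 ω)))))) := mul4_le (fact3 _) (fact1 _) (fact1 _) (fact1 _)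
              zero_le_one zero_le_one zero_le_one (by positivity) (by positivity) (by positivity))
      (fun t => (intP Y1 Y2 Y3 Y4 hint t t2 t3 t4).congr
        (Filter.Eventually.of_forall fun ω => by
          beta_reduce; rw [show t * Y1 ω + t2 * Y2 ω + t3 * Y3 ω + t4 * Y4 ω
              = t * Y1 ω + (t2 * Y2 ω + (t3 * Y3 ω + t4 * Y4 ω)) from by ring]
          ring)) 0
    have hdd : HasDerivAt (fun t : ℝ => Real.exp (ρ * (((Real.exp t - 1) + (Real.exp t2 - 1) + (Real.exp t3 - 1) + (Real.exp t4 - 1)) +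
    a * (Real.exp t - 1) * (Real.exp t2 - 1) +
    b * (Real.exp t - 1) * Real.exp t2 * (Real.exp t3 - 1) +
    c * (Real.exp t - 1) * Real.exp (t2 + t3) * (Real.exp t4 - 1) +
    d * (Real.exp t2 - 1) * (Real.exp t3 - 1) +
    e * (Real.exp t2 - 1) * Real.exp t3 * (Real.exp t4 - 1) +
    f * (Real.exp t3 - 1) * (Real.exp t4 - 1))))
        (∫ ω, (1:ℝ) * Y1 ω * Real.exp (0 * Y1 ω + (t2 * Y2 ω + (t3 * Y3 ω + t4 * Y4 ω)))) 0 :=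
      hder.congr_of_eventuallyEq (Filter.Eventually.of_forall fun t => by
        beta_reduce; rw [← (hmgf t t2 t3 t4).2]
        exact integral_congr_ae (Filter.Eventually.of_forall fun ω => by
          beta_reduce; rw [show t * Y1 ω + t2 * Y2 ω + t3 * Y3 ω + t4 * Y4 ω
              = t * Y1 ω + (t2 * Y2 ω + (t3 * Y3 ω + t4 * Y4 ω)) from by ring, one_mul]))
    have hfin : HasDerivAt (fun t : ℝ => Real.exp (ρ * (((Real.exp t - 1) + (Real.exp t2 - 1) + (Real.exp t3 - 1) + (Real.exp t4 - 1)) +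
    a * (Real.exp t - 1) * (Real.exp t2 - 1) +
    b * (Real.exp t - 1) * Real.exp t2 * (Real.exp t3 - 1) +
    c * (Real.exp t - 1) * Real.exp (t2 + t3) * (Real.exp t4 - 1) +
    d * (Real.exp t2 - 1) * (Real.exp t3 - 1) +
    e * (Real.exp t2 - 1) * Real.exp t3 * (Real.exp t4 - 1) +
    f * (Real.exp t3 - 1) * (Real.exp t4 - 1))))
        ((0 + 1 * (ρ * (1 + a * (Real.exp t2 - 1) + b * Real.exp t2 * (Real.exp t3 - 1) + c * (Real.exp t2 * Real.exp t3) * (Real.exp t4 - 1)))) * Real.exp ((ρ * (((Real.exp t2 - 1) + (Real.exp t3 - 1) + (Real.exp t4 - 1) + d * (Real.exp t2 - 1) * (Real.exp t3 - 1) + e * (Real.exp t2 - 1) * Real.exp t3 * (Real.exp t4 - 1) + f * (Real.exp t3 - 1) * (Real.exp t4 - 1)) - (1 + a * (Real.exp t2 - 1) + b * Real.exp t2 * (Real.exp t3 - 1) + c * (Real.exp t2 * Real.exp t3) * (Real.exp t4 - 1)))) + (ρ * (1 + a * (Real.exp t2 - 1) + b * Real.exp t2 * (Real.exp t3 - 1)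 + c * (Real.exp t2 * Real.exp t3) * (Real.exp t4 - 1))))) 0 :=
      (stagederiv 1 0 0 0 (ρ * (((Real.exp t2 - 1) + (Real.exp t3 - 1) + (Real.exp t4 - 1) + d * (Real.exp t2 - 1) * (Real.exp t3 - 1) + e * (Real.exp t2 - 1) * Real.exp t3 * (Real.exp t4 - 1) + f * (Real.exp t3 - 1) * (Real.exp t4 - 1)) - (1 + a * (Real.exp t2 - 1) + b * Real.exp t2 * (Real.exp t3 - 1) + c * (Real.exp t2 * Real.exp t3) * (Real.exp t4 - 1)))) (ρ * (1 + a * (Real.exp t2 - 1) + b * Real.exp t2 * (Real.exp t3 - 1) + c * (Real.exp t2 * Real.exp t3) * (Real.exp t4 - 1)))).congr_of_eventuallyEq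
        (Filter.Eventually.of_forall fun t => by
          beta_reduce; rw [show ρ * (((Real.exp t - 1) + (Real.exp t2 - 1) + (Real.exp t3 - 1) + (Real.exp t4 - 1)) +
    a * (Real.exp t - 1) * (Real.exp t2 - 1) +
    b * (Real.exp t - 1) * Real.exp t2 * (Real.exp t3 - 1) +
    c * (Real.exp t - 1) * Real.exp (t2 + t3) * (Real.exp t4 - 1) +
    d * (Real.exp t2 - 1) * (Real.exp t3 - 1) +
    e * (Real.exp t2 - 1) * Real.exp t3 * (Real.exp t4 - 1) +
    f * (Real.exp t3 - 1) * (Real.exp t4 - 1)) = (ρ * (((Real.exp t2 - 1) + (Real.exp t3 - 1) + (Real.exp t4 - 1) + d * (Real.exp t2 - 1) * (Real.exp t3 - 1) + e * (Real.exp t2 - 1) * Real.exp t3 * (Real.exp t4 - 1) + f * (Real.exp t3 - 1) * (Real.exp t4 - 1)) - (1 + a * (Real.exp t2 - 1) + b * Real.exp t2 * (Real.exp t3 - 1) + c * (Real.exp t2 * Real.exp t3) * (Real.exp t4 - 1)))) + (ρ * (1 + a * (Real.exp t2 - 1) + b * Real.exp t2 * (Real.exp t3 - 1) + c * (Real.exp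 t2 * Real.exp t3) * (Real.exp t4 - 1))) * Real.exp t from by
            rw [Real.exp_add]; ring]
          ring)
    have hval := hdd.unique hfin
    calc ∫ ω, Y1 ω * Real.exp (t2 * Y2 ω + (t3 * Y3 ω + t4 * Y4 ω))
        = ∫ ω, (1:ℝ) * Y1 ω * Real.exp (0 * Y1 ω + (t2 * Y2 ω + (t3 * Y3 ω + t4 * Y4 ω))) :=
          integral_congr_ae (Filter.Eventually.of_forall fun ω => by norm_num)
      _ = (0 + 1 * (ρ * (1 + a * (Real.exp t2 - 1) + b * Real.exp t2 * (Real.exp t3 - 1) + c * (Real.exp t2 * Real.exp t3) * (Real.exp t4 - 1)))) * Real.exp ((ρ * (((Real.exp t2 - 1) + (Real.exp t3 - 1) + (Real.exp t4 - 1) + d * (Real.exp t2 - 1) * (Real.exp t3 - 1) + e * (Real.exp t2 - 1) * Real.exp t3 * (Real.exp t4 - 1) + f * (Real.exp t3 - 1) * (Real.exp t4 - 1)) - (1 + a * (Real.exp t2 - 1) + b * Real.exp t2 * (Real.exp t3 - 1) + c * (Real.exp t2 * Real.exp t3) * (Real.exp t4 - 1)))) + (ρ * (1 + a * (Real.exp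 t2 - 1) + b * Real.exp t2 * (Real.exp t3 - 1) + c * (Real.exp t2 * Real.exp t3) * (Real.exp t4 - 1)))) := hval
      _ = ρ * (1 + a * (Real.exp t2 - 1) + b * Real.exp t2 * (Real.exp t3 - 1) + c * (Real.exp t2 * Real.exp t3) * (Real.exp t4 - 1)) * Real.exp (ρ * ((Real.exp t2 - 1) + (Real.exp t3 - 1) + (Real.exp t4 - 1) + d * (Real.exp t2 - 1) * (Real.exp t3 - 1) + e * (Real.exp t2 - 1) * Real.exp t3 * (Real.exp t4 - 1) + f * (Real.exp t3 - 1) * (Real.exp t4 - 1))) := by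
          beta_reduce; rw [show (ρ * (((Real.exp t2 - 1) + (Real.exp t3 - 1) + (Real.exp t4 - 1) + d * (Real.exp t2 - 1) * (Real.exp t3 - 1) + e * (Real.exp t2 - 1) * Real.exp t3 * (Real.exp t4 - 1) + f * (Real.exp t3 - 1) * (Real.exp t4 - 1)) - (1 + a * (Real.exp t2 - 1) + b * Real.exp t2 * (Real.exp t3 - 1) + c * (Real.exp t2 * Real.exp t3) * (Real.exp t4 - 1)))) + (ρ * (1 + a * (Real.exp t2 - 1) + b * Real.exp t2 * (Real.exp t3 - 1) + c * (Real.exp t2 * Real.exp t3) * (Real.exp t4 - 1))) = ρ * ((Real.exp t2 - 1) + (Real.exp t3 - 1) + (Real.exp t4 - 1) + d * (Real.exp t2 - 1) * (Real.exp t3 - 1) + e * (Real.exp t2 - 1) * Real.exp t3 * (Real.exp t4 - 1) + f * (Real.exp t3 - 1) * (Real.exp t4 - 1)) from by ring]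
          ring
  -- Stage 2
  have eq2 : ∀ t3 t4 : ℝ,
      ∫ ω, Y1 ω * Y2 ω * Real.exp (t3 * Y3 ω + t4 * Y4 ω) = ρ * ((a + b * (Real.exp t3 - 1) + c * Real.exp t3 * (Real.exp t4 - 1)) + ρ * (1 + b * (Real.exp t3 - 1) + c * Real.exp t3 * (Real.exp t4 - 1)) * (1 + d * (Real.exp t3 - 1) + e * Real.exp t3 * (Real.exp t4 - 1))) * Real.exp (ρ * ((Real.exp t3 - 1) + (Real.exp t4 - 1) + f * (Real.exp t3 - 1) * (Real.exp t4 - 1))) := by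
    intro t3 t4
    obtain ⟨_, hder⟩ := master (W := Y1) (X := Y2)
      (R := fun ω => t3 * Y3 ω + t4 * Y4 ω)
      hY1.aestronglyMeasurable hY2
      ((hY3.const_mul t3).add (hY4.const_mul t4))
      (fun ω => by
        calc |Y1 ω| * ((1 + |Y2 ω|) * Real.exp |Y2 ω|)
            = |Y1 ω| * (((1 + |Y2 ω|) * Real.exp |Y2 ω|) * (1 * 1)) := by ring
          _ ≤ ((Real.exp (2*Y1 ω) + Real.exp (-(2*Y1 ω))) * ((Real.exp (2*Y2 ω) + Real.exp (-(2*Y2 ω))) * ((Real.exp (2*Y3 ω) + Real.exp (-(2*Y3 ω))) * (Real.exp (2*Y4 ω) + Real.exp (-(2*Y4 ω)))))) := mul4_le (fact2 _) (fact3 _) (fact1 _) (fact1 _)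
              (by positivity) zero_le_one zero_le_one (by positivity) (by positivity) (by positivity))
      (fun t => (intP Y1 Y2 Y3 Y4 hint 0 t t3 t4).congr
        (Filter.Eventually.of_forall fun ω => by
          beta_reduce; rw [show (0:ℝ) * Y1 ω + t * Y2 ω + t3 * Y3 ω + t4 * Y4 ω
              = t * Y2 ω + (t3 * Y3 ω + t4 * Y4 ω) from by ring]
          ring)) 0
    have hdd : HasDerivAt (fun t : ℝ => ρ * (1 + a * (Real.exp t - 1) + b * Real.exp t * (Real.exp t3 - 1) + c * (Real.exp t * Real.exp t3) * (Real.exp t4 - 1)) * Real.exp (ρ * ((Real.exp t - 1) + (Real.exp t3 - 1) + (Real.exp t4 - 1) + d * (Real.exp t - 1) * (Real.exp t3 - 1) + e * (Real.exp t - 1) * Real.exp t3 * (Real.exp t4 - 1) + f * (Real.exp t3 - 1) * (Real.exp t4 - 1))))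
        (∫ ω, Y1 ω * Y2 ω * Real.exp (0 * Y2 ω + (t3 * Y3 ω + t4 * Y4 ω))) 0 :=
      hder.congr_of_eventuallyEq (Filter.Eventually.of_forall fun t => (eq1 t t3 t4).symm)
    have hfin : HasDerivAt (fun t : ℝ => ρ * (1 + a * (Real.exp t - 1) + b * Real.exp t * (Real.exp t3 - 1) + c * (Real.exp t * Real.exp t3) * (Real.exp t4 - 1)) * Real.exp (ρ * ((Real.exp t - 1) + (Real.exp t3 - 1) + (Real.exp t4 - 1) + d * (Real.exp t - 1) * (Real.exp t3 - 1) + e * (Real.exp t - 1) * Real.exp t3 * (Real.exp t4 - 1) + f * (Real.exp t3 - 1) * (Real.exp t4 - 1))))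
        (((ρ * (a + b * (Real.exp t3 - 1) + c * Real.exp t3 * (Real.exp t4 - 1))) + (ρ * (1 + b * (Real.exp t3 - 1) + c * Real.exp t3 * (Real.exp t4 - 1))) * (ρ * (1 + d * (Real.exp t3 - 1) + e * Real.exp t3 * (Real.exp t4 - 1)))) * Real.exp ((ρ * ((Real.exp t3 - 1) + (Real.exp t4 - 1) + f * (Real.exp t3 - 1) * (Real.exp t4 - 1)) - ρ * (1 + d * (Real.exp t3 - 1) + e * Real.exp t3 * (Real.exp t4 - 1))) + (ρ * (1 + d * (Real.exp t3 - 1) + e * Real.exp t3 * (Real.exp t4 - 1))))) 0 :=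
      (stagederiv (ρ * (1 + b * (Real.exp t3 - 1) + c * Real.exp t3 * (Real.exp t4 - 1))) (ρ * (a + b * (Real.exp t3 - 1) + c * Real.exp t3 * (Real.exp t4 - 1))) 0 0 (ρ * ((Real.exp t3 - 1) + (Real.exp t4 - 1) + f * (Real.exp t3 - 1) * (Real.exp t4 - 1)) - ρ * (1 + d * (Real.exp t3 - 1) + e * Real.exp t3 * (Real.exp t4 - 1))) (ρ * (1 + d * (Real.exp t3 - 1) + e * Real.exp t3 * (Real.exp t4 - 1)))).congr_of_eventuallyEq
        (Filter.Eventually.of_forall fun t => by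
          beta_reduce; rw [show ρ * ((Real.exp t - 1) + (Real.exp t3 - 1) + (Real.exp t4 - 1) + d * (Real.exp t - 1) * (Real.exp t3 - 1) + e * (Real.exp t - 1) * Real.exp t3 * (Real.exp t4 - 1) + f * (Real.exp t3 - 1) * (Real.exp t4 - 1)) = (ρ * ((Real.exp t3 - 1) + (Real.exp t4 - 1) + f * (Real.exp t3 - 1) * (Real.exp t4 - 1)) - ρ * (1 + d * (Real.exp t3 - 1) + e * Real.exp t3 * (Real.exp t4 - 1))) + (ρ * (1 + d * (Real.exp t3 - 1) + e * Real.exp t3 * (Real.exp t4 - 1))) * Real.exp t from by ring]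
          ring)
    have hval := hdd.unique hfin
    calc ∫ ω, Y1 ω * Y2 ω * Real.exp (t3 * Y3 ω + t4 * Y4 ω)
        = ∫ ω, Y1 ω * Y2 ω * Real.exp (0 * Y2 ω + (t3 * Y3 ω + t4 * Y4 ω)) :=
          integral_congr_ae (Filter.Eventually.of_forall fun ω => by norm_num)
      _ = ((ρ * (a + b * (Real.exp t3 - 1) + c * Real.exp t3 * (Real.exp t4 - 1))) + (ρ * (1 + b * (Real.exp t3 - 1) + c * Real.exp t3 * (Real.exp t4 - 1))) * (ρ * (1 + d * (Real.exp t3 - 1) + e * Real.exp t3 * (Real.exp t4 - 1)))) * Real.exp ((ρ * ((Real.exp t3 - 1) + (Real.exp t4 - 1) + f * (Real.exp t3 - 1) * (Real.exp t4 - 1)) - ρ * (1 + d * (Real.exp t3 - 1) + e * Real.exp t3 * (Real.exp t4 - 1))) + (ρ * (1 + d * (Real.exp t3 - 1) + e * Real.exp t3 * (Real.exp t4 - 1)))) := hval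
      _ = ρ * ((a + b * (Real.exp t3 - 1) + c * Real.exp t3 * (Real.exp t4 - 1)) + ρ * (1 + b * (Real.exp t3 - 1) + c * Real.exp t3 * (Real.exp t4 - 1)) * (1 + d * (Real.exp t3 - 1) + e * Real.exp t3 * (Real.exp t4 - 1))) * Real.exp (ρ * ((Real.exp t3 - 1) + (Real.exp t4 - 1) + f * (Real.exp t3 - 1) * (Real.exp t4 - 1))) := by
          beta_reduce; rw [show (ρ * ((Real.exp t3 - 1) + (Real.exp t4 - 1) + f * (Real.exp t3 - 1) * (Real.exp t4 - 1)) - ρ * (1 + d * (Real.exp t3 - 1) + e * Real.exp t3 * (Real.exp t4 - 1))) + (ρ * (1 + d * (Real.exp t3 - 1) + e * Real.exp t3 * (Real.exp t4 - 1))) = ρ * ((Real.exp t3 - 1) + (Real.exp t4 - 1) + f * (Real.exp t3 - 1) * (Real.exp t4 - 1)) from by ring]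
          ring
  -- Stage 3
  have eq3 : ∀ t4 : ℝ,
      ∫ ω, Y1 ω * Y2 ω * Y3 ω * Real.exp (t4 * Y4 ω + 0) = ρ * ((b + c * (Real.exp t4 - 1)) + ρ * ((1 + c * (Real.exp t4 - 1)) * (d + e * (Real.exp t4 - 1)) + (b + c * (Real.exp t4 - 1)) * (1 + e * (Real.exp t4 - 1))) + ρ * ((a + c * (Real.exp t4 - 1)) + ρ * (1 + c * (Real.exp t4 - 1)) * (1 + e * (Real.exp t4 - 1))) * (1 + f * (Real.exp t4 - 1))) * Real.exp (ρ * (Real.exp t4 - 1)) := by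
    intro t4
    obtain ⟨_, hder⟩ := master (W := fun ω => Y1 ω * Y2 ω) (X := Y3)
      (R := fun ω => t4 * Y4 ω)
      (hY1.mul hY2).aestronglyMeasurable hY3 (hY4.const_mul t4)
      (fun ω => by
        calc |Y1 ω * Y2 ω| * ((1 + |Y3 ω|) * Real.exp |Y3 ω|)
            = |Y1 ω| * (|Y2 ω| * (((1 + |Y3 ω|) * Real.exp |Y3 ω|) * 1)) := by
              rw [abs_mul]; ring
          _ ≤ ((Real.exp (2*Y1 ω) + Real.exp (-(2*Y1 ω))) * ((Real.exp (2*Y2 ω) + Real.exp (-(2*Y2 ω))) * ((Real.exp (2*Y3 ω) + Real.exp (-(2*Y3 ω))) * (Real.exp (2*Y4 ω) + Real.exp (-(2*Y4 ω)))))) := mul4_le (fact2 _) (fact2 _) (fact3 _) (fact1 _)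
              (by positivity) (by positivity) zero_le_one (by positivity) (by positivity)
              (by positivity))
      (fun t => (intP Y1 Y2 Y3 Y4 hint 0 0 t t4).congr
        (Filter.Eventually.of_forall fun ω => by
          beta_reduce; rw [show (0:ℝ) * Y1 ω + 0 * Y2 ω + t * Y3 ω + t4 * Y4 ω
              = t * Y3 ω + t4 * Y4 ω from by ring]
          ring)) 0
    have hdd : HasDerivAt (fun t : ℝ => ρ * ((a + b * (Real.exp t - 1) + c * Real.exp t * (Real.exp t4 - 1)) + ρ * (1 + b * (Real.exp t - 1) + c * Real.exp t * (Real.exp t4 - 1)) * (1 + d * (Real.exp t - 1) + e * Real.exp t * (Real.exp t4 - 1))) * Real.exp (ρ * ((Real.exp t - 1) + (Real.exp t4 - 1) + f * (Real.exp t - 1) * (Real.exp t4 - 1))))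
        (∫ ω, (Y1 ω * Y2 ω) * Y3 ω * Real.exp (0 * Y3 ω + t4 * Y4 ω)) 0 :=
      hder.congr_of_eventuallyEq (Filter.Eventually.of_forall fun t => (eq2 t t4).symm)
    have hfin : HasDerivAt (fun t : ℝ => ρ * ((a + b * (Real.exp t - 1) + c * Real.exp t * (Real.exp t4 - 1)) + ρ * (1 + b * (Real.exp t - 1) + c * Real.exp t * (Real.exp t4 - 1)) * (1 + d * (Real.exp t - 1) + e * Real.exp t * (Real.exp t4 - 1))) * Real.exp (ρ * ((Real.exp t - 1) + (Real.exp t4 - 1) + f * (Real.exp t - 1) * (Real.exp t4 - 1))))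
        (((ρ * ((b + c * (Real.exp t4 - 1)) + ρ * ((1 + c * (Real.exp t4 - 1)) * (d + e * (Real.exp t4 - 1)) + (b + c * (Real.exp t4 - 1)) * (1 + e * (Real.exp t4 - 1))))) + (ρ * ((a + c * (Real.exp t4 - 1)) + ρ * (1 + c * (Real.exp t4 - 1)) * (1 + e * (Real.exp t4 - 1)))) * (ρ * (1 + f * (Real.exp t4 - 1)))) * Real.exp ((ρ * (Real.exp t4 - 1) - ρ * (1 + f * (Real.exp t4 - 1))) + (ρ * (1 + f * (Real.exp t4 - 1))))) 0 :=
      (stagederiv (ρ * ((a + c * (Real.exp t4 - 1)) + ρ * (1 + c * (Real.exp t4 - 1)) * (1 + e * (Real.exp t4 - 1)))) (ρ * ((b + c * (Real.exp t4 - 1)) + ρ * ((1 + c * (Real.exp t4 - 1)) * (d + e * (Real.exp t4 - 1)) + (b + c * (Real.exp t4 - 1)) * (1 + e * (Real.exp t4 - 1))))) (ρ * (ρ * (b + c * (Real.exp t4 - 1)) * (d + e * (Real.exp t4 - 1)))) 0 (ρ * (Real.exp t4 - 1) - ρ * (1 + f * (Real.exp t4 - 1))) (ρ * (1 + f * (Real.exp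 t4 - 1)))).congr_of_eventuallyEq
        (Filter.Eventually.of_forall fun t => by
          beta_reduce; rw [show ρ * ((Real.exp t - 1) + (Real.exp t4 - 1) + f * (Real.exp t - 1) * (Real.exp t4 - 1)) = (ρ * (Real.exp t4 - 1) - ρ * (1 + f * (Real.exp t4 - 1))) + (ρ * (1 + f * (Real.exp t4 - 1))) * Real.exp t from by ring]
          ring)
    have hval := hdd.unique hfin
    calc ∫ ω, Y1 ω * Y2 ω * Y3 ω * Real.exp (t4 * Y4 ω + 0)
        = ∫ ω, (Y1 ω * Y2 ω) * Y3 ω * Real.exp (0 * Y3 ω + t4 * Y4 ω) :=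
          integral_congr_ae (Filter.Eventually.of_forall fun ω => by norm_num)
      _ = ((ρ * ((b + c * (Real.exp t4 - 1)) + ρ * ((1 + c * (Real.exp t4 - 1)) * (d + e * (Real.exp t4 - 1)) + (b + c * (Real.exp t4 - 1)) * (1 + e * (Real.exp t4 - 1))))) + (ρ * ((a + c * (Real.exp t4 - 1)) + ρ * (1 + c * (Real.exp t4 - 1)) * (1 + e * (Real.exp t4 - 1)))) * (ρ * (1 + f * (Real.exp t4 - 1)))) * Real.exp ((ρ * (Real.exp t4 - 1) - ρ * (1 + f * (Real.exp t4 - 1))) + (ρ * (1 + f * (Real.exp t4 - 1)))) := hval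
      _ = ρ * ((b + c * (Real.exp t4 - 1)) + ρ * ((1 + c * (Real.exp t4 - 1)) * (d + e * (Real.exp t4 - 1)) + (b + c * (Real.exp t4 - 1)) * (1 + e * (Real.exp t4 - 1))) + ρ * ((a + c * (Real.exp t4 - 1)) + ρ * (1 + c * (Real.exp t4 - 1)) * (1 + e * (Real.exp t4 - 1))) * (1 + f * (Real.exp t4 - 1))) * Real.exp (ρ * (Real.exp t4 - 1)) := by
          beta_reduce; rw [show (ρ * (Real.exp t4 - 1) - ρ * (1 + f * (Real.exp t4 - 1))) + (ρ * (1 + f * (Real.exp t4 - 1))) = ρ * (Real.exp t4 - 1) from by ring]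
          ring
  -- Stage 4
  obtain ⟨hi4, hder⟩ := master (W := fun ω => Y1 ω * Y2 ω * Y3 ω) (X := Y4)
    (R := fun _ => (0:ℝ))
    ((hY1.mul hY2).mul hY3).aestronglyMeasurable hY4 aemeasurable_const
    (fun ω => by
      calc |Y1 ω * Y2 ω * Y3 ω| * ((1 + |Y4 ω|) * Real.exp |Y4 ω|)
          = |Y1 ω| * (|Y2 ω| * (|Y3 ω| * ((1 + |Y4 ω|) * Real.exp |Y4 ω|))) := by
            rw [abs_mul, abs_mul]; ring
        _ ≤ ((Real.exp (2*Y1 ω) + Real.exp (-(2*Y1 ω))) * ((Real.exp (2*Y2 ω) + Real.exp (-(2*Y2 ω))) * ((Real.exp (2*Y3 ω) + Real.exp (-(2*Y3 ω))) * (Real.exp (2*Y4 ω) + Real.exp (-(2*Y4 ω)))))) := mul4_le (fact2 _) (fact2 _) (fact2 _) (fact3 _)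
            (by positivity) (by positivity) (by positivity) (by positivity) (by positivity)
            (by positivity))
    (fun t => (intP Y1 Y2 Y3 Y4 hint 0 0 0 t).congr
      (Filter.Eventually.of_forall fun ω => by
        beta_reduce; rw [show (0:ℝ) * Y1 ω + 0 * Y2 ω + 0 * Y3 ω + t * Y4 ω
            = t * Y4 ω + 0 from by ring]
        ring)) 0
  have hdd : HasDerivAt (fun t : ℝ => ρ * ((b + c * (Real.exp t - 1)) + ρ * ((1 + c * (Real.exp t - 1)) * (d + e * (Real.exp t - 1)) + (b + c * (Real.exp t - 1)) * (1 + e * (Real.exp t - 1))) + ρ * ((a + c * (Real.exp t - 1)) + ρ * (1 + c * (Real.exp t - 1)) * (1 + e * (Real.exp t - 1))) * (1 + f * (Real.exp t - 1))) * Real.exp (ρ * (Real.exp t - 1)))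
      (∫ ω, (Y1 ω * Y2 ω * Y3 ω) * Y4 ω * Real.exp (0 * Y4 ω + 0)) 0 :=
    hder.congr_of_eventuallyEq (Filter.Eventually.of_forall fun t => (eq3 t).symm)
  have hfin : HasDerivAt (fun t : ℝ => ρ * ((b + c * (Real.exp t - 1)) + ρ * ((1 + c * (Real.exp t - 1)) * (d + e * (Real.exp t - 1)) + (b + c * (Real.exp t - 1)) * (1 + e * (Real.exp t - 1))) + ρ * ((a + c * (Real.exp t - 1)) + ρ * (1 + c * (Real.exp t - 1)) * (1 + e * (Real.exp t - 1))) * (1 + f * (Real.exp t - 1))) * Real.exp (ρ * (Real.exp t - 1)))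
      (((ρ * (c + ρ * (2*c + b*e + c*d + e + a*f) + ρ^2 * (c + e + f))) + (ρ * (b + ρ * (a + b + d) + ρ^2)) * ρ) * Real.exp ((-ρ) + ρ)) 0 :=
    (stagederiv (ρ * (b + ρ * (a + b + d) + ρ^2)) (ρ * (c + ρ * (2*c + b*e + c*d + e + a*f) + ρ^2 * (c + e + f))) (ρ * (ρ * (2*c*e + c*f) + ρ^2 * (c*e + c*f + e*f))) (ρ * (ρ^2 * (c*e*f))) (-ρ) ρ).congr_of_eventuallyEq
      (Filter.Eventually.of_forall fun t => by
        beta_reduce; rw [show ρ * (Real.exp t - 1) = (-ρ) + ρ * Real.exp t from by ring]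
        ring)
  have hval := hdd.unique hfin
  constructor
  · exact hi4.congr (Filter.Eventually.of_forall fun ω => by norm_num)
  · calc ∫ ω, Y1 ω * Y2 ω * Y3 ω * Y4 ω
        = ∫ ω, (Y1 ω * Y2 ω * Y3 ω) * Y4 ω * Real.exp (0 * Y4 ω + 0) :=
          integral_congr_ae (Filter.Eventually.of_forall fun ω => by norm_num)
      _ = ((ρ * (c + ρ * (2*c + b*e + c*d + e + a*f) + ρ^2 * (c + e + f))) + (ρ * (b + ρ * (a + b + d) + ρ^2)) * ρ) * Real.exp ((-ρ) + ρ) := hval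
      _ = ρ ^ 4 + ρ ^ 3 * (a + b + c + d + e + f) +
            ρ ^ 2 * (b + e + 2 * c + a * f + b * e + d * c) + ρ * c := by
          beta_reduce; rw [show (-ρ) + ρ = (0:ℝ) from by ring, Real.exp_zero]
          ring

/-- The exponent `S(θ)` of the joint moment generating function of four coordinates
of the sampled M/G/∞ queue-length process (indices `i ≤ j ≤ k ≤ m`). -/
noncomputable def S4 (H : ℕ → ℝ) (i j k m : ℕ) (t1 t2 t3 t4 : ℝ) : ℝ :=
  ((Real.exp t1 - 1) + (Real.exp t2 - 1) + (Real.exp t3 - 1) + (Real.exp t4 - 1)) +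
    H (j - i) * (Real.exp t1 - 1) * (Real.exp t2 - 1) +
    H (k - i) * (Real.exp t1 - 1) * Real.exp t2 * (Real.exp t3 - 1) +
    H (m - i) * (Real.exp t1 - 1) * Real.exp (t2 + t3) * (Real.exp t4 - 1) +
    H (k - j) * (Real.exp t2 - 1) * (Real.exp t3 - 1) +
    H (m - j) * (Real.exp t2 - 1) * Real.exp t3 * (Real.exp t4 - 1) +
    H (m - k) * (Real.exp t3 - 1) * (Real.exp t4 - 1)

/-- fourth mixed moment of a random vector whose MGF is `exp(ρ S(θ))`. -/
theorem stmt2 {Ω : Type*} [MeasureSpace Ω] [IsProbabilityMeasure (ℙ : Measure Ω)]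
    (ρ : ℝ) (hρ : 0 < ρ) (H : ℕ → ℝ) (hH0 : H 0 = 1)
    (i j k m : ℕ) (h1 : 1 ≤ i) (hij : i ≤ j) (hjk : j ≤ k) (hkm : k ≤ m)
    (Y1 Y2 Y3 Y4 : Ω → ℝ)
    (hmgf : ∀ t1 t2 t3 t4 : ℝ,
      Integrable (fun ω => Real.exp (t1 * Y1 ω + t2 * Y2 ω + t3 * Y3 ω + t4 * Y4 ω)) ∧
        ∫ ω, Real.exp (t1 * Y1 ω + t2 * Y2 ω + t3 * Y3 ω + t4 * Y4 ω) =
          Real.exp (ρ * S4 H i j k m t1 t2 t3 t4)) :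
    Integrable (fun ω => Y1 ω * Y2 ω * Y3 ω * Y4 ω) ∧
      ∫ ω, Y1 ω * Y2 ω * Y3 ω * Y4 ω =
        ρ ^ 4 +
          ρ ^ 3 * (H (j - i) + H (k - i) + H (m - i) + H (k - j) + H (m - j) + H (m - k)) +
          ρ ^ 2 * (H (k - i) + H (m - j) + 2 * H (m - i) + H (j - i) * H (m - k) +
            H (k - i) * H (m - j) + H (k - j) * H (m - i)) +
          ρ * H (m - i) := by
  exact core ρ (H (j - i)) (H (k - i)) (H (m - i)) (H (k - j)) (H (m - j)) (H (m - k))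
    Y1 Y2 Y3 Y4 (fun t1 t2 t3 t4 => by simpa only [S4] using hmgf t1 t2 t3 t4)
end

section
/- Let A be a real n×n matrix with spectral (operator) norm ‖A‖₂ < 1. Then det(I + A) > 0 and |log det(I + A) − tr(A) + (1/2) tr(A²)| ≤ (1/3) ‖A‖₂ ‖A‖_F² (1 − ‖A‖₂)^{−3}, where ‖A‖_F denotes the Frobenius norm. -/
/-!
Put `f t = log det (1 + t A) - t tr A + (t² / 2) tr (A²)` for `t ∈ [0, 1]`. Jacobi's formula gives
`d/dt log det (1 + t A) = tr ((1 + t A)⁻¹ A)`, and the resolvent identity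
`(1 + t A)⁻¹ = 1 - t A + t² A² (1 + t A)⁻¹` turns this into `f' t = t² tr (A · A (1 + t A)⁻¹ A)`.
By Cauchy–Schwarz for `(X, Y) ↦ tr (X Y)` and `‖C M‖_F ≤ ‖C‖₂ ‖M‖_F`, together with the Neumann
series bound `‖(1 + t A)⁻¹‖₂ ≤ (1 - ‖A‖₂)⁻¹`, we get `|f' t| ≤ t² ‖A‖₂ ‖A‖_F² / (1 - ‖A‖₂)`, so
`|f 1| ≤ ‖A‖₂ ‖A‖_F² / (3 (1 - ‖A‖₂))`. Positivity of `det (1 + A)` follows from the intermediate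
value theorem, since `det (1 + t A)` equals `1` at `t = 0` and never vanishes on `[0, 1]`.
-/

/-- The spectral (operator) norm of a real `n×n` matrix, i.e. the operator norm of the
induced map on Euclidean space. -/
noncomputable def specNorm {n : ℕ} (A : Matrix (Fin n) (Fin n) ℝ) : ℝ :=
  ‖Matrix.toEuclideanCLM (𝕜 := ℝ) A‖

open Matrix Polynomial Set
open scoped Matrix.Norms.L2Operator

theorem norm_smul_le_of_mem_Icc {E : Type*} [SeminormedAddCommGroup E] [NormedSpace ℝ E]
    (x : E) {u : ℝ} (hu : u ∈ Icc (0 : ℝ) 1) : ‖u • x‖ ≤ ‖x‖ :=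
  (norm_smul_le u x).trans <| by
    rw [Real.norm_of_nonneg hu.1]
    exact mul_le_of_le_one_left (norm_nonneg x) hu.2

theorem norm_inverse_one_sub_le {R : Type*} [NormedRing R] [HasSummableGeomSeries R]
    (h1 : ‖(1 : R)‖ ≤ 1) {x : R} (hx : ‖x‖ < 1) :
    ‖Ring.inverse (1 - x)‖ ≤ (1 - ‖x‖)⁻¹ := by
  rw [NormedRing.inverse_one_sub x hx]
  show ‖∑' n, x ^ n‖ ≤ _
  linarith [tsum_geometric_le_of_norm_lt_one x hx]

theorem specNorm_eq_l2_opNorm {n : ℕ} (A : Matrix (Fin n) (Fin n) ℝ) : specNorm A = ‖A‖ :=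
  (cstar_norm_def A).symm

namespace Matrix

variable {m : Type*} [Fintype m]

theorem sq_trace_mul_le (X Y : Matrix m m ℝ) :
    trace (X * Y) ^ 2 ≤ (∑ i, ∑ j, X i j ^ 2) * ∑ i, ∑ j, Y i j ^ 2 := by
  have h := Finset.sum_mul_sq_le_sq_mul_sq Finset.univ
    (fun p : m × m => X p.1 p.2) (fun p => Y p.2 p.1)
  simp only [Fintype.sum_prod_type] at h
  rw [Finset.sum_comm (f := fun i j => Y j i ^ 2)] at h
  simpa [trace, mul_apply] using h

theorem sum_sq_mul_le_l2_opNorm_sq_mul {k l : Type*} [Fintype k] [DecidableEq k] [Fintype l]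
    (C : Matrix m k ℝ) (M : Matrix k l ℝ) :
    ∑ i, ∑ j, (C * M) i j ^ 2 ≤ ‖C‖ ^ 2 * ∑ i, ∑ j, M i j ^ 2 := by
  rw [Finset.sum_comm, Finset.sum_comm (f := fun i j => M i j ^ 2), Finset.mul_sum]
  refine Finset.sum_le_sum fun j _ => ?_
  have h := pow_le_pow_left₀ (norm_nonneg _) (C.l2_opNorm_mulVec (WithLp.toLp 2 (M · j))) 2
  simpa [mul_pow, EuclideanSpace.norm_sq_eq, mulVec, dotProduct, mul_apply] using h

variable [DecidableEq m]

theorem abs_trace_mul_mul_mul_le (A B : Matrix m m ℝ) :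
    |trace (A * (A * B * A))| ≤ ‖A‖ * ‖B‖ * ∑ i, ∑ j, A i j ^ 2 := by
  refine abs_le_of_sq_le_sq ?_ (by positivity)
  calc trace (A * (A * B * A)) ^ 2
      ≤ (∑ i, ∑ j, A i j ^ 2) * ∑ i, ∑ j, (A * B * A) i j ^ 2 := sq_trace_mul_le _ _
    _ ≤ (∑ i, ∑ j, A i j ^ 2) * (‖A * B‖ ^ 2 * ∑ i, ∑ j, A i j ^ 2) := by
        gcongr; exact sum_sq_mul_le_l2_opNorm_sq_mul _ _
    _ ≤ (∑ i, ∑ j, A i j ^ 2) * ((‖A‖ * ‖B‖) ^ 2 * ∑ i, ∑ j, A i j ^ 2) := by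
        gcongr; exact norm_mul_le _ _
    _ = (‖A‖ * ‖B‖ * ∑ i, ∑ j, A i j ^ 2) ^ 2 := by ring

theorem l2_opNorm_one_le : ‖(1 : Matrix m m ℝ)‖ ≤ 1 := by
  rw [cstar_norm_def, map_one]
  exact ContinuousLinearMap.norm_id_le

theorem isUnit_one_add_of_l2_opNorm_lt_one {A : Matrix m m ℝ} (hA : ‖A‖ < 1) :
    IsUnit (1 + A) := by
  have := (Units.oneSub (-A) (by rwa [norm_neg])).isUnit
  rwa [Units.val_oneSub, sub_neg_eq_add] at this

theorem l2_opNorm_inv_one_add_le {A : Matrix m m ℝ} (hA : ‖A‖ < 1) :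
    ‖(1 + A)⁻¹‖ ≤ (1 - ‖A‖)⁻¹ := by
  have := norm_inverse_one_sub_le l2_opNorm_one_le (x := -A) (by rwa [norm_neg])
  rwa [sub_neg_eq_add, norm_neg, ← nonsing_inv_eq_ringInverse] at this

theorem det_one_add_pos_of_l2_opNorm_lt_one {A : Matrix m m ℝ} (hA : ‖A‖ < 1) :
    0 < det (1 + A) := by
  have hne : ∀ u ∈ Icc (0 : ℝ) 1, det (1 + u • A) ≠ 0 := fun u hu =>
    ((isUnit_iff_isUnit_det _).mp <| isUnit_one_add_of_l2_opNorm_lt_one <|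
      (norm_smul_le_of_mem_Icc A hu).trans_lt hA).ne_zero
  have hcont : Continuous fun u : ℝ => det (1 + u • A) := by fun_prop
  by_contra! hle
  obtain ⟨c, hc, hc0⟩ := intermediate_value_Icc' zero_le_one hcont.continuousOn
    (show (0 : ℝ) ∈ Icc (det (1 + (1 : ℝ) • A)) (det (1 + (0 : ℝ) • A)) by simp [hle])
  exact hne c hc hc0

section Jacobi

variable {𝕜 : Type*} [NontriviallyNormedField 𝕜]

theorem hasDerivAt_det_one_add_smul_zero (M : Matrix m m 𝕜) :
    HasDerivAt (fun r : 𝕜 => det (1 + r • M)) (trace M) 0 := by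
  have h := (det (1 + (X : 𝕜[X]) • M.map C)).hasDerivAt 0
  rw [derivative_det_one_add_X_smul] at h
  convert h using 1
  funext r
  simp [eval_det, ← smul_eq_mul_diagonal]

theorem hasDerivAt_det_one_add_smul {A : Matrix m m 𝕜} {t : 𝕜} (ht : IsUnit (1 + t • A)) :
    HasDerivAt (fun u : 𝕜 => det (1 + u • A))
      (det (1 + t • A) * trace ((1 + t • A)⁻¹ * A)) t := by
  set M := (1 + t • A)⁻¹ * A
  have hfactor : ∀ u : 𝕜, 1 + u • A = (1 + t • A) * (1 + (u - t) • M) := fun u => by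
    rw [mul_add, mul_one, mul_smul_comm,
      mul_nonsing_inv_cancel_left _ _ ((isUnit_iff_isUnit_det _).mp ht), add_assoc, ← add_smul,
      add_sub_cancel]
  have hdet : (fun u : 𝕜 => det (1 + u • A)) = fun u => det (1 + t • A) * det (1 + (u - t) • M) :=
    funext fun u => by rw [hfactor u, det_mul]
  rw [hdet]
  exact HasDerivAt.const_mul _ <|
    HasDerivAt.comp_sub_const t t (by simpa using hasDerivAt_det_one_add_smul_zero M)

end Jacobi

theorem hasDerivAt_log_det_one_add_smul {A : Matrix m m ℝ} {t : ℝ} (ht : IsUnit (1 + t • A)) :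
    HasDerivAt (fun u => Real.log (det (1 + u • A))) (trace ((1 + t • A)⁻¹ * A)) t := by
  have hdet := ((isUnit_iff_isUnit_det _).mp ht).ne_zero
  simpa [hdet] using (hasDerivAt_det_one_add_smul ht).log hdet

theorem trace_nonsing_inv_one_add_smul_mul {A : Matrix m m ℝ} {t : ℝ} (ht : IsUnit (1 + t • A)) :
    trace ((1 + t • A)⁻¹ * A) =
      trace A - t * trace (A * A) + t ^ 2 * trace (A * (A * (1 + t • A)⁻¹ * A)) := by
  set B := (1 + t • A)⁻¹
  have hB : B = 1 - t • (A * B) := by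
    have := mul_nonsing_inv (1 + t • A) ((isUnit_iff_isUnit_det _).mp ht)
    rw [add_mul, one_mul, smul_mul_assoc] at this
    rw [← this, add_sub_cancel_right]
  have hexpand : B = 1 - t • A + t ^ 2 • (A * A * B) := by
    conv_lhs => rw [hB, hB]
    simp only [mul_sub, mul_one, mul_smul_comm, smul_sub, smul_smul, ← mul_assoc]
    module
  conv_lhs => rw [hexpand]
  simp only [add_mul, sub_mul, one_mul, smul_mul_assoc, trace_add, trace_sub, trace_smul,
    smul_eq_mul, mul_assoc]

theorem abs_trace_mul_mul_inv_one_add_smul_mul_le {A : Matrix m m ℝ} (hA : ‖A‖ < 1) {u : ℝ}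
    (hu : u ∈ Icc (0 : ℝ) 1) :
    |trace (A * (A * (1 + u • A)⁻¹ * A))| ≤ ‖A‖ / (1 - ‖A‖) * ∑ i, ∑ j, A i j ^ 2 := by
  have huA := norm_smul_le_of_mem_Icc A hu
  calc |trace (A * (A * (1 + u • A)⁻¹ * A))|
      ≤ ‖A‖ * ‖(1 + u • A)⁻¹‖ * ∑ i, ∑ j, A i j ^ 2 := abs_trace_mul_mul_mul_le _ _
    _ ≤ ‖A‖ * (1 - ‖A‖)⁻¹ * ∑ i, ∑ j, A i j ^ 2 := by
      gcongr
      exact (l2_opNorm_inv_one_add_le (huA.trans_lt hA)).trans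
        (inv_anti₀ (by linarith) (by linarith))
    _ = ‖A‖ / (1 - ‖A‖) * ∑ i, ∑ j, A i j ^ 2 := by rw [div_eq_mul_inv]

theorem abs_log_det_one_add_smul_sub_le {A : Matrix m m ℝ} (hA : ‖A‖ < 1) {t : ℝ}
    (ht : t ∈ Icc (0 : ℝ) 1) :
    |Real.log (det (1 + t • A)) - t * trace A + t ^ 2 / 2 * trace (A * A)| ≤
      ‖A‖ / (1 - ‖A‖) * (∑ i, ∑ j, A i j ^ 2) * (t ^ 3 / 3) := by
  set K := ‖A‖ / (1 - ‖A‖) * ∑ i, ∑ j, A i j ^ 2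
  have hunit : ∀ u ∈ Icc (0 : ℝ) 1, IsUnit (1 + u • A) := fun u hu =>
    isUnit_one_add_of_l2_opNorm_lt_one ((norm_smul_le_of_mem_Icc A hu).trans_lt hA)
  have hderiv : ∀ u ∈ Icc (0 : ℝ) 1,
      HasDerivAt (fun u => Real.log (det (1 + u • A)) - u * trace A + u ^ 2 / 2 * trace (A * A))
        (u ^ 2 * trace (A * (A * (1 + u • A)⁻¹ * A))) u := by
    intro u hu
    refine (((hasDerivAt_log_det_one_add_smul (hunit u hu)).sub
      ((hasDerivAt_id u).mul_const (trace A))).add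
      (((hasDerivAt_pow 2 u).div_const 2).mul_const (trace (A * A)))).congr_deriv ?_
    rw [trace_nonsing_inv_one_add_smul_mul (hunit u hu)]
    simp only [Nat.cast_ofNat]
    ring
  have hbound : ∀ u ∈ Ico (0 : ℝ) 1,
      ‖u ^ 2 * trace (A * (A * (1 + u • A)⁻¹ * A))‖ ≤ K * u ^ 2 := fun u hu => by
    rw [Real.norm_eq_abs, abs_mul, abs_sq, mul_comm K]
    gcongr
    exact abs_trace_mul_mul_inv_one_add_smul_mul_le hA (Ico_subset_Icc_self hu)
  refine image_norm_le_of_norm_deriv_right_le_deriv_boundary (B := fun u => K * (u ^ 3 / 3))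
    (fun u hu => (hderiv u hu).continuousAt.continuousWithinAt)
    (fun u hu => (hderiv u (Ico_subset_Icc_self hu)).hasDerivWithinAt)
    (by simp) (fun u => ?_) hbound ht
  refine (((hasDerivAt_pow 3 u).div_const 3).const_mul K).congr_deriv ?_
  simp only [Nat.cast_ofNat]
  ring

end Matrix

/-- Lemma of Davies: if `‖A‖₂ < 1` then `det(I + A) > 0` and
`|log det(I+A) − tr A + (1/2) tr(A²)| ≤ (1/3)‖A‖₂ ‖A‖_F² (1 − ‖A‖₂)^{−3}`. -/
theorem stmt13 {n : ℕ} (A : Matrix (Fin n) (Fin n) ℝ) (hA : specNorm A < 1) :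
    0 < (1 + A).det ∧
      |Real.log (1 + A).det - A.trace + (1 / 2) * (A * A).trace| ≤
        (1 / 3) * specNorm A * (∑ i, ∑ j, (A i j) ^ 2) / (1 - specNorm A) ^ 3 := by
  rw [specNorm_eq_l2_opNorm] at hA ⊢
  refine ⟨det_one_add_pos_of_l2_opNorm_lt_one hA, ?_⟩
  have h := abs_log_det_one_add_smul_sub_le hA (t := 1) ⟨zero_le_one, le_rfl⟩
  rw [one_smul, one_mul, one_pow, one_pow] at h
  have h1 : 0 < 1 - ‖A‖ := by linarith
  calc _ ≤ ‖A‖ / (1 - ‖A‖) * (∑ i, ∑ j, A i j ^ 2) * (1 / 3) := h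
    _ = (1 / 3) * ‖A‖ * (∑ i, ∑ j, A i j ^ 2) / (1 - ‖A‖) := by ring
    _ ≤ (1 / 3) * ‖A‖ * (∑ i, ∑ j, A i j ^ 2) / (1 - ‖A‖) ^ 3 := by
      gcongr
      exact pow_le_of_le_one h1.le (by linarith [norm_nonneg A]) (by norm_num)
end
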